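/- Let Φ be of the form (IA). There exists δ > 0 and constants C > 0 such that for all sufficiently small x > 0 and all x̂, ŷ with 0 < x ≤ δ, |y| ≤ x^N, |x − x̂| ≤ x⁸ and x^(−3)|y − ŷ| ≤ x⁸, writing (X,Y) = Φ(x,y) and (X̂,Ŷ) = Φ(x̂,ŷ), one has |X − X̂| + X^(−3)|Y − Ŷ| ≤ (1 + 2x + Cx²)·(|x − x̂| + x^(−3)|y − ŷ|) and X^(−8) ≤ x^(−8)(1 − 8x + Cx²). -/

import Mathlib

/-!
Each `θ` is `C¹` near the origin, hence bounded and Lipschitz with one constant `M` on a small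
ball. Measure errors by `Δ = |x - x̂| + x⁻³|y - ŷ|`. Since `x̂ ∈ [0, 2x]` and `|ŷ| ≤ 2x⁵`, every
term of `Φ(x,y) - Φ(x̂,ŷ)` is `O(x²Δ)` after weighting, except `(x - x̂)(1 + x + x̂)` in `X` and
`-(y - ŷ)(1 - λx + …)` in `Y`. The factor `1 - λx + …` has modulus at most `1` because `λ > 0`,
and `X ≥ x`, so dividing by `X³` costs no more than dividing by `x³`. The second estimate is
Bernoulli's inequality applied to `X ≥ x(1 + x - 2Mx²)`.
-/

open Set Filter Asymptotics Topology

/-- First component of a map `Φ` of the form (IA):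
`X = x + x² + x³ θ_A(x,y) + y θ_B(x,y)`. -/
noncomputable def XIA (θA θB : ℝ × ℝ → ℝ) (x y : ℝ) : ℝ :=
  x + x ^ 2 + x ^ 3 * θA (x, y) + y * θB (x, y)

/-- Second component of a map `Φ` of the form (IA):
`Y = -y(1 - λx + y θ_C(x,y) + x² θ_D(x,y)) + x^(N+100) θ_E(x,y)`. -/
noncomputable def YIA (θC θD θE : ℝ × ℝ → ℝ) (lam : ℝ) (N : ℕ) (x y : ℝ) : ℝ :=
  -y * (1 - lam * x + y * θC (x, y) + x ^ 2 * θD (x, y)) + x ^ (N + 100) * θE (x, y)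

open Metric

def BoundedLipschitzOn {E : Type*} [PseudoMetricSpace E] (f : E → ℝ) (s : Set E) (M : ℝ) : Prop :=
  (∀ p ∈ s, |f p| ≤ M) ∧ ∀ p ∈ s, ∀ q ∈ s, |f p - f q| ≤ M * dist p q

namespace BoundedLipschitzOn

variable {E : Type*} [PseudoMetricSpace E] {f : E → ℝ} {s t : Set E} {M M' : ℝ}

lemma mono (hf : BoundedLipschitzOn f s M) (hts : t ⊆ s) (hM : M ≤ M') :
    BoundedLipschitzOn f t M' :=
  ⟨fun p hp => (hf.1 p (hts hp)).trans hM, fun p hp q hq =>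
    (hf.2 p (hts hp) q (hts hq)).trans (by gcongr)⟩

lemma abs_mul_sub_mul_le (hf : BoundedLipschitzOn f s M) {p q : E} (hp : p ∈ s) (hq : q ∈ s)
    {u v a b e : ℝ} (hpq : dist p q ≤ e) (huv : |u - v| ≤ a * e) (hv : |v| ≤ b) :
    |u * f p - v * f q| ≤ M * (a + b) * e := by
  have hM : 0 ≤ M := (abs_nonneg _).trans (hf.1 p hp)
  have hdiff : |u - v| * |f p| ≤ (a * e) * M :=
    mul_le_mul huv (hf.1 p hp) (abs_nonneg _) ((abs_nonneg _).trans huv)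
  have hlip : |v| * |f p - f q| ≤ b * (M * e) :=
    mul_le_mul hv ((hf.2 p hp q hq).trans (by gcongr)) (abs_nonneg _) ((abs_nonneg _).trans hv)
  calc |u * f p - v * f q| = |(u - v) * f p + v * (f p - f q)| := by ring_nf
    _ ≤ |u - v| * |f p| + |v| * |f p - f q| := by
        rw [← abs_mul, ← abs_mul]; exact abs_add_le _ _
    _ ≤ M * (a + b) * e := by linarith

end BoundedLipschitzOn

lemma ContDiffAt.eventually_boundedLipschitzOn {E : Type*} [NormedAddCommGroup E]
    [NormedSpace ℝ E] {f : E → ℝ} {a : E} (hf : ContDiffAt ℝ 1 f a) :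
    ∀ᶠ rM : ℝ × ℝ in 𝓝[>] 0 ×ˢ atTop, BoundedLipschitzOn f (closedBall a rM.1) rM.2 := by
  obtain ⟨K, t, ht, hK⟩ := hf.exists_lipschitzOnWith
  obtain ⟨r₀, hr₀, hsub⟩ := nhds_basis_closedBall.mem_iff.mp ht
  have hKr₀ : 0 ≤ K * r₀ := mul_nonneg K.2 hr₀.le
  have hbound : BoundedLipschitzOn f (closedBall a r₀) (K + |f a| + K * r₀) := by
    refine ⟨fun p hp => ?_, fun p hp q hq => ?_⟩
    · have hpa : |f p - f a| ≤ K * r₀ := by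
        rw [← Real.dist_eq]
        exact (hK.dist_le_mul p (hsub hp) a (hsub (mem_closedBall_self hr₀.le))).trans
          (by gcongr; exact mem_closedBall.mp hp)
      have := abs_sub_abs_le_abs_sub (f p) (f a)
      linarith [K.2]
    · rw [← Real.dist_eq]
      refine (hK.dist_le_mul p (hsub hp) q (hsub hq)).trans
        (mul_le_mul_of_nonneg_right ?_ dist_nonneg)
      linarith [abs_nonneg (f a)]
  filter_upwards [prod_mem_prod (Ioc_mem_nhdsGT hr₀) (Ici_mem_atTop (K + |f a| + K * r₀))]
  rintro ⟨r, M⟩ ⟨⟨-, hr⟩, hM⟩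
  exact hbound.mono (closedBall_subset_closedBall hr) hM

lemma inv_pow_le_of_mul_one_add_le {x X t : ℝ} (n : ℕ) (hx : 0 < x) (ht : 0 ≤ t)
    (hX : x * (1 + t) ≤ X) : (X ^ n)⁻¹ ≤ (x ^ n)⁻¹ * (1 - n * t + (n * t) ^ 2) := by
  have hnt : 0 ≤ n * t := by positivity
  have hbernoulli : x ^ n * (1 + n * t) ≤ X ^ n :=
    calc x ^ n * (1 + n * t) ≤ x ^ n * (1 + t) ^ n := by
          gcongr; exact one_add_mul_le_pow (by linarith) n
      _ = (x * (1 + t)) ^ n := (mul_pow _ _ _).symm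
      _ ≤ X ^ n := by gcongr
  -- `(1 + u) * (1 - u + u ^ 2) = 1 + u ^ 3`
  have hinv : (1 + n * t)⁻¹ ≤ 1 - n * t + (n * t) ^ 2 := by
    rw [inv_le_iff_one_le_mul₀ (by positivity)]
    nlinarith [pow_nonneg hnt 3]
  calc (X ^ n)⁻¹ ≤ (x ^ n * (1 + n * t))⁻¹ := inv_anti₀ (by positivity) hbernoulli
    _ = (x ^ n)⁻¹ * (1 + n * t)⁻¹ := mul_inv _ _
    _ ≤ (x ^ n)⁻¹ * (1 - n * t + (n * t) ^ 2) := by gcongr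

lemma mk_mem_closedBall_zero {a b r : ℝ} (ha : |a| ≤ r) (hb : |b| ≤ r) :
    (a, b) ∈ closedBall (0 : ℝ × ℝ) r := by
  rw [mem_closedBall_zero_iff, Prod.norm_def]
  exact max_le ha hb

noncomputable def weightedDist (x y xh yh : ℝ) : ℝ := |x - xh| + |y - yh| / x ^ 3

section WeightedDist

variable {x y xh yh : ℝ}

lemma abs_sub_le_weightedDist (hx : 0 < x) : |x - xh| ≤ weightedDist x y xh yh :=
  le_add_of_nonneg_right (by positivity)

lemma abs_sub_le_pow_three_mul_weightedDist (hx : 0 < x) :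
    |y - yh| ≤ x ^ 3 * weightedDist x y xh yh := by
  calc |y - yh| = x ^ 3 * (|y - yh| / x ^ 3) := by field_simp
    _ ≤ x ^ 3 * weightedDist x y xh yh := by
        gcongr; exact le_add_of_nonneg_left (abs_nonneg _)

lemma dist_le_weightedDist (hx : 0 < x) (hx1 : x ≤ 1) :
    dist (x, y) (xh, yh) ≤ weightedDist x y xh yh := by
  have hD : 0 ≤ weightedDist x y xh yh := (abs_nonneg _).trans (abs_sub_le_weightedDist hx)
  rw [Prod.dist_eq, Real.dist_eq, Real.dist_eq]
  refine max_le (abs_sub_le_weightedDist hx)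
    ((abs_sub_le_pow_three_mul_weightedDist (xh := xh) hx).trans ?_)
  exact mul_le_of_le_one_left hD (pow_le_one₀ hx.le hx1)

lemma nonneg_and_le_two_mul_of_abs_sub_le (hx0 : 0 ≤ x) (hx1 : x ≤ 1) (hxh : |x - xh| ≤ x ^ 2) :
    0 ≤ xh ∧ xh ≤ 2 * x := by
  have hx2 : x ^ 2 ≤ x := pow_le_of_le_one hx0 hx1 two_ne_zero
  constructor <;> linarith [(abs_le.mp hxh).1, (abs_le.mp hxh).2]

lemma abs_pow_sub_pow_le_of_abs_sub_le (n : ℕ) (hx0 : 0 ≤ x) (hx1 : x ≤ 1)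
    (hxh : |x - xh| ≤ x ^ 2) : |x ^ n - xh ^ n| ≤ n * (2 * x) ^ (n - 1) * |x - xh| := by
  obtain ⟨hxh0, hxh2⟩ := nonneg_and_le_two_mul_of_abs_sub_le hx0 hx1 hxh
  have hmax : max |x| |xh| ≤ 2 * x := by
    rw [abs_of_nonneg hx0, abs_of_nonneg hxh0]; exact max_le (by linarith) hxh2
  calc |x ^ n - xh ^ n| ≤ |x - xh| * n * max |x| |xh| ^ (n - 1) := abs_pow_sub_pow_le _ _ _
    _ ≤ |x - xh| * n * (2 * x) ^ (n - 1) := by gcongr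
    _ = n * (2 * x) ^ (n - 1) * |x - xh| := by ring

end WeightedDist

noncomputable def factorIA (θC θD : ℝ × ℝ → ℝ) (lam x y : ℝ) : ℝ :=
  1 - lam * x + y * θC (x, y) + x ^ 2 * θD (x, y)

section FormIA

variable {θA θB θC θD θE : ℝ × ℝ → ℝ} {s : Set (ℝ × ℝ)} {r M lam C : ℝ} {N : ℕ}
  {x y xh yh : ℝ}

lemma abs_XIA_sub_le (hA : BoundedLipschitzOn θA s M) (hB : BoundedLipschitzOn θB s M)
    (hp : (x, y) ∈ s) (hq : (xh, yh) ∈ s) (hx : 0 < x) (hx1 : x ≤ 1)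
    (hxh : |x - xh| ≤ x ^ 2) (hyh : |yh| ≤ 2 * x ^ 5) :
    |XIA θA θB x y - XIA θA θB xh yh|
      ≤ (1 + 2 * x) * |x - xh| + (1 + 23 * M) * x ^ 2 * weightedDist x y xh yh := by
  set D := weightedDist x y xh yh
  obtain ⟨hxh0, hxh2⟩ := nonneg_and_le_two_mul_of_abs_sub_le hx.le hx1 hxh
  have hxD : |x - xh| ≤ D := abs_sub_le_weightedDist hx
  have hD0 : 0 ≤ D := (abs_nonneg _).trans hxD
  have hpq : dist (x, y) (xh, yh) ≤ D := dist_le_weightedDist hx hx1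
  have hx32 : x ^ 3 ≤ x ^ 2 := pow_le_pow_of_le_one hx.le hx1 (by norm_num)
  have hx52 : x ^ 5 ≤ x ^ 2 := pow_le_pow_of_le_one hx.le hx1 (by norm_num)
  have hlin : |(x - xh) * (1 + x + xh)| ≤ (1 + 2 * x) * |x - xh| + x ^ 2 * D := by
    rw [abs_mul, abs_of_nonneg (by positivity : 0 ≤ 1 + x + xh)]
    have : 1 + x + xh ≤ 1 + 2 * x + x ^ 2 := by linarith [(abs_le.mp hxh).1]
    nlinarith [abs_nonneg (x - xh), sq_nonneg x]
  have hA' : |x ^ 3 * θA (x, y) - xh ^ 3 * θA (xh, yh)| ≤ M * (12 * x ^ 2 + 8 * x ^ 2) * D := by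
    refine hA.abs_mul_sub_mul_le hp hq hpq ?_ ?_
    · calc |x ^ 3 - xh ^ 3| ≤ (3 : ℕ) * (2 * x) ^ (3 - 1) * |x - xh| :=
            abs_pow_sub_pow_le_of_abs_sub_le 3 hx.le hx1 hxh
        _ ≤ 12 * x ^ 2 * D := by norm_num; nlinarith [sq_nonneg x]
    · rw [abs_of_nonneg (by positivity)]
      calc xh ^ 3 ≤ (2 * x) ^ 3 := by gcongr
        _ ≤ 8 * x ^ 2 := by linarith
  have hB' : |y * θB (x, y) - yh * θB (xh, yh)| ≤ M * (x ^ 2 + 2 * x ^ 2) * D := by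
    refine hB.abs_mul_sub_mul_le hp hq hpq ?_ (by linarith)
    exact (abs_sub_le_pow_three_mul_weightedDist (xh := xh) hx).trans (by gcongr)
  have hsplit : XIA θA θB x y - XIA θA θB xh yh = (x - xh) * (1 + x + xh)
      + (x ^ 3 * θA (x, y) - xh ^ 3 * θA (xh, yh)) + (y * θB (x, y) - yh * θB (xh, yh)) := by
    simp only [XIA]; ring
  rw [hsplit]
  linarith [abs_add_three ((x - xh) * (1 + x + xh)) (x ^ 3 * θA (x, y) - xh ^ 3 * θA (xh, yh))
    (y * θB (x, y) - yh * θB (xh, yh))]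

lemma YIA_eq_factorIA (θC θD θE : ℝ × ℝ → ℝ) (lam : ℝ) (N : ℕ) (x y : ℝ) :
    YIA θC θD θE lam N x y = -(y * factorIA θC θD lam x y) + x ^ (N + 100) * θE (x, y) := by
  simp only [YIA, factorIA]; ring

lemma abs_factorIA_le_one (hC : |θC (x, y)| ≤ M) (hD : |θD (x, y)| ≤ M) (hx : 0 ≤ x)
    (hy : |y| ≤ x ^ 2) (hMlam : 2 * M * x ≤ lam) (hlam : lam * x ≤ 1) :
    |factorIA θC θD lam x y| ≤ 1 := by
  have hyC : |y * θC (x, y)| ≤ x ^ 2 * M := by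
    rw [abs_mul]; exact mul_le_mul hy hC (abs_nonneg _) (by positivity)
  have hxD : |x ^ 2 * θD (x, y)| ≤ x ^ 2 * M := by
    rw [abs_mul, abs_of_nonneg (by positivity)]; gcongr
  have hsmall : 2 * M * x ^ 2 ≤ lam * x := by nlinarith
  rw [factorIA, abs_le]
  constructor <;> linarith [abs_le.mp hyC, abs_le.mp hxD]

lemma abs_factorIA_sub_le (hC : BoundedLipschitzOn θC s M) (hD : BoundedLipschitzOn θD s M)
    (hp : (x, y) ∈ s) (hq : (xh, yh) ∈ s) (hlam : 0 ≤ lam) (hx : 0 < x) (hx1 : x ≤ 1)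
    (hxh : |x - xh| ≤ x ^ 2) (hyh : |yh| ≤ 2 * x ^ 5) :
    |factorIA θC θD lam x y - factorIA θC θD lam xh yh|
      ≤ (lam + 11 * M) * weightedDist x y xh yh := by
  set D := weightedDist x y xh yh
  obtain ⟨hxh0, hxh2⟩ := nonneg_and_le_two_mul_of_abs_sub_le hx.le hx1 hxh
  have hxD : |x - xh| ≤ D := abs_sub_le_weightedDist hx
  have hD0 : 0 ≤ D := (abs_nonneg _).trans hxD
  have hpq : dist (x, y) (xh, yh) ≤ D := dist_le_weightedDist hx hx1
  have hlin : |lam * (x - xh)| ≤ lam * D := by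
    rw [abs_mul, abs_of_nonneg hlam]; gcongr
  have hC' : |y * θC (x, y) - yh * θC (xh, yh)| ≤ M * (1 + 2) * D := by
    refine hC.abs_mul_sub_mul_le hp hq hpq ?_ ?_
    · exact (abs_sub_le_pow_three_mul_weightedDist (xh := xh) hx).trans
        (by rw [one_mul]; exact mul_le_of_le_one_left hD0 (pow_le_one₀ hx.le hx1))
    · exact hyh.trans (by linarith [pow_le_one₀ (n := 5) hx.le hx1])
  have hD' : |x ^ 2 * θD (x, y) - xh ^ 2 * θD (xh, yh)| ≤ M * (4 + 4) * D := by
    refine hD.abs_mul_sub_mul_le hp hq hpq ?_ ?_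
    · calc |x ^ 2 - xh ^ 2| ≤ (2 : ℕ) * (2 * x) ^ (2 - 1) * |x - xh| :=
            abs_pow_sub_pow_le_of_abs_sub_le 2 hx.le hx1 hxh
        _ ≤ 4 * D := by norm_num; nlinarith [abs_nonneg (x - xh)]
    · rw [abs_of_nonneg (by positivity)]
      calc xh ^ 2 ≤ (2 * x) ^ 2 := by gcongr
        _ ≤ 4 := by nlinarith
  have hsplit : factorIA θC θD lam x y - factorIA θC θD lam xh yh = -(lam * (x - xh))
      + (y * θC (x, y) - yh * θC (xh, yh)) + (x ^ 2 * θD (x, y) - xh ^ 2 * θD (xh, yh)) := by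
    simp only [factorIA]; ring
  rw [hsplit]
  linarith [abs_add_three (-(lam * (x - xh))) (y * θC (x, y) - yh * θC (xh, yh))
    (x ^ 2 * θD (x, y) - xh ^ 2 * θD (xh, yh)), abs_neg (lam * (x - xh))]

lemma abs_YIA_sub_le (hC : BoundedLipschitzOn θC s M) (hD : BoundedLipschitzOn θD s M)
    (hE : BoundedLipschitzOn θE s M) (hp : (x, y) ∈ s) (hq : (xh, yh) ∈ s)
    (hx : 0 < x) (hx1 : x ≤ 1) (hMlam : 2 * M * x ≤ lam) (hlamx : lam * x ≤ 1)
    (hy : |y| ≤ x ^ 2) (hxh : |x - xh| ≤ x ^ 2) (hyh : |yh| ≤ 2 * x ^ 5) :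
    |YIA θC θD θE lam N x y - YIA θC θD θE lam N xh yh| ≤ |y - yh|
      + (2 * (lam + 11 * M) + M * ((N + 100) * 2 ^ (N + 99) + 2 ^ (N + 100)))
        * x ^ 5 * weightedDist x y xh yh := by
  set D := weightedDist x y xh yh
  set F := factorIA θC θD lam x y
  set Fh := factorIA θC θD lam xh yh
  obtain ⟨hxh0, hxh2⟩ := nonneg_and_le_two_mul_of_abs_sub_le hx.le hx1 hxh
  have hxD : |x - xh| ≤ D := abs_sub_le_weightedDist hx
  have hD0 : 0 ≤ D := (abs_nonneg _).trans hxD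
  have hM0 : 0 ≤ M := (abs_nonneg _).trans (hC.1 _ hp)
  have hlam : 0 ≤ lam := by nlinarith
  have hx5 : x ^ (N + 99) ≤ x ^ 5 := pow_le_pow_of_le_one hx.le hx1 (by omega)
  have hyF : |(y - yh) * F| ≤ |y - yh| := by
    rw [abs_mul]
    exact mul_le_of_le_one_right (abs_nonneg _)
      (abs_factorIA_le_one (hC.1 _ hp) (hD.1 _ hp) hx.le hy hMlam hlamx)
  have hyhF : |yh * (F - Fh)| ≤ 2 * x ^ 5 * ((lam + 11 * M) * D) := by
    rw [abs_mul]
    exact mul_le_mul hyh (abs_factorIA_sub_le hC hD hp hq hlam hx hx1 hxh hyh) (abs_nonneg _)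
      (by positivity)
  have hE' : |x ^ (N + 100) * θE (x, y) - xh ^ (N + 100) * θE (xh, yh)|
      ≤ M * ((N + 100) * 2 ^ (N + 99) * x ^ 5 + 2 ^ (N + 100) * x ^ 5) * D := by
    refine hE.abs_mul_sub_mul_le hp hq (dist_le_weightedDist hx hx1) ?_ ?_
    · calc |x ^ (N + 100) - xh ^ (N + 100)|
          ≤ ((N + 100 : ℕ) : ℝ) * (2 * x) ^ (N + 100 - 1) * |x - xh| :=
            abs_pow_sub_pow_le_of_abs_sub_le _ hx.le hx1 hxh
        _ = (N + 100) * 2 ^ (N + 99) * x ^ (N + 99) * |x - xh| := by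
            rw [show N + 100 - 1 = N + 99 by omega, mul_pow]; push_cast; ring
        _ ≤ (N + 100) * 2 ^ (N + 99) * x ^ 5 * D := by gcongr
    · rw [abs_of_nonneg (by positivity)]
      calc xh ^ (N + 100) ≤ (2 * x) ^ (N + 100) := by gcongr
        _ = 2 ^ (N + 100) * x ^ (N + 100) := mul_pow _ _ _
        _ ≤ 2 ^ (N + 100) * x ^ 5 :=
            mul_le_mul_of_nonneg_left (pow_le_pow_of_le_one hx.le hx1 (by omega)) (by positivity)
  have hsplit : YIA θC θD θE lam N x y - YIA θC θD θE lam N xh yh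
      = -((y - yh) * F + yh * (F - Fh))
        + (x ^ (N + 100) * θE (x, y) - xh ^ (N + 100) * θE (xh, yh)) := by
    rw [YIA_eq_factorIA, YIA_eq_factorIA]; ring
  rw [hsplit]
  linarith [abs_add_le (-((y - yh) * F + yh * (F - Fh)))
      (x ^ (N + 100) * θE (x, y) - xh ^ (N + 100) * θE (xh, yh)),
    abs_neg ((y - yh) * F + yh * (F - Fh)), abs_add_le ((y - yh) * F) (yh * (F - Fh))]

lemma XIA_lower_bound (hA : |θA (x, y)| ≤ M) (hB : |θB (x, y)| ≤ M) (hx : 0 ≤ x)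
    (hy : |y| ≤ x ^ 3) : x + x ^ 2 - 2 * M * x ^ 3 ≤ XIA θA θB x y := by
  have hxA : |x ^ 3 * θA (x, y)| ≤ x ^ 3 * M := by
    rw [abs_mul, abs_of_nonneg (by positivity)]; gcongr
  have hyB : |y * θB (x, y)| ≤ x ^ 3 * M := by
    rw [abs_mul]; exact mul_le_mul hy hB (abs_nonneg _) (by positivity)
  rw [XIA]
  linarith [abs_le.mp hxA, abs_le.mp hyB]

lemma inv_XIA_pow_eight_le (hA : |θA (x, y)| ≤ M) (hB : |θB (x, y)| ≤ M) (hx : 0 < x)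
    (h2Mx : 2 * M * x ≤ 1) (hy : |y| ≤ x ^ 3) (hC : 16 * M + 64 ≤ C) :
    ((XIA θA θB x y) ^ 8)⁻¹ ≤ (x ^ 8)⁻¹ * (1 - 8 * x + C * x ^ 2) := by
  have hM0 : 0 ≤ M := (abs_nonneg _).trans hA
  have ht0 : 0 ≤ x - 2 * M * x ^ 2 := by nlinarith
  have htx : x - 2 * M * x ^ 2 ≤ x := by nlinarith
  refine (inv_pow_le_of_mul_one_add_le 8 hx ht0 ?_).trans ?_
  · linarith [XIA_lower_bound hA hB hx.le hy]
  · refine mul_le_mul_of_nonneg_left ?_ (by positivity)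
    push_cast
    nlinarith [mul_le_mul htx htx ht0 hx.le]

lemma abs_XIA_sub_add_abs_YIA_sub_div_le (hA : BoundedLipschitzOn θA s M)
    (hB : BoundedLipschitzOn θB s M) (hC : BoundedLipschitzOn θC s M)
    (hD : BoundedLipschitzOn θD s M) (hE : BoundedLipschitzOn θE s M)
    (hp : (x, y) ∈ s) (hq : (xh, yh) ∈ s) (hx : 0 < x) (hx1 : x ≤ 1) (h2Mx : 2 * M * x ≤ 1)
    (hMlam : 2 * M * x ≤ lam) (hlamx : lam * x ≤ 1) (hy : |y| ≤ x ^ 3)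
    (hxh : |x - xh| ≤ x ^ 2) (hyh : |yh| ≤ 2 * x ^ 5)
    (hCbig : 1 + 23 * M + (2 * (lam + 11 * M)
      + M * ((N + 100) * 2 ^ (N + 99) + 2 ^ (N + 100))) ≤ C) :
    |XIA θA θB x y - XIA θA θB xh yh|
        + |YIA θC θD θE lam N x y - YIA θC θD θE lam N xh yh| / (XIA θA θB x y) ^ 3
      ≤ (1 + 2 * x + C * x ^ 2) * weightedDist x y xh yh := by
  have hy2 : |y| ≤ x ^ 2 := hy.trans (pow_le_pow_of_le_one hx.le hx1 (by norm_num))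
  have hX := abs_XIA_sub_le hA hB hp hq hx hx1 hxh hyh
  have hYIA := abs_YIA_sub_le (N := N) hC hD hE hp hq hx hx1 hMlam hlamx hy2 hxh hyh
  set K := 2 * (lam + 11 * M) + M * ((N + 100) * 2 ^ (N + 99) + 2 ^ (N + 100))
  set D := weightedDist x y xh yh
  have hD0 : 0 ≤ D := (abs_nonneg _).trans (abs_sub_le_weightedDist hx)
  have hxX : x ≤ XIA θA θB x y := by
    nlinarith [XIA_lower_bound (hA.1 _ hp) (hB.1 _ hp) hx.le hy]
  have hY : |YIA θC θD θE lam N x y - YIA θC θD θE lam N xh yh| / (XIA θA θB x y) ^ 3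
      ≤ |y - yh| / x ^ 3 + K * x ^ 2 * D := by
    refine (div_le_div_of_nonneg_left (abs_nonneg _) (by positivity)
      (pow_le_pow_left₀ hx.le hxX 3)).trans ?_
    rw [div_le_iff₀ (by positivity), add_mul, div_mul_cancel₀ _ (by positivity)]
    linarith
  have hCx : (1 + 23 * M + K) * x ^ 2 * D ≤ C * x ^ 2 * D := by gcongr
  have hBx : 0 ≤ 2 * x * (|y - yh| / x ^ 3) := by positivity
  simp only [D, weightedDist] at hX hY hCx ⊢
  linarith

theorem shadowing_estimates_of_boundedLipschitzOn
    (hA : BoundedLipschitzOn θA (closedBall 0 r) M) (hB : BoundedLipschitzOn θB (closedBall 0 r) M)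
    (hC : BoundedLipschitzOn θC (closedBall 0 r) M) (hD : BoundedLipschitzOn θD (closedBall 0 r) M)
    (hE : BoundedLipschitzOn θE (closedBall 0 r) M) (hN : 5 ≤ N)
    (hCX : 1 + 23 * M + (2 * (lam + 11 * M)
      + M * ((N + 100) * 2 ^ (N + 99) + 2 ^ (N + 100))) ≤ C) (hCinv : 16 * M + 64 ≤ C)
    (hx : 0 < x) (hx1 : x ≤ 1) (hxr : 2 * x ≤ r) (h2Mx : 2 * M * x ≤ 1)
    (hMlam : 2 * M * x ≤ lam) (hlamx : lam * x ≤ 1)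
    (hy : |y| ≤ x ^ N) (hxh : |x - xh| ≤ x ^ 8) (hyh : |y - yh| / x ^ 3 ≤ x ^ 8) :
    |XIA θA θB x y - XIA θA θB xh yh|
        + |YIA θC θD θE lam N x y - YIA θC θD θE lam N xh yh| / (XIA θA θB x y) ^ 3
      ≤ (1 + 2 * x + C * x ^ 2) * (|x - xh| + |y - yh| / x ^ 3) ∧
    ((XIA θA θB x y) ^ 8)⁻¹ ≤ (x ^ 8)⁻¹ * (1 - 8 * x + C * x ^ 2) := by
  have hpow {m n : ℕ} (hmn : m ≤ n) : x ^ n ≤ x ^ m := pow_le_pow_of_le_one hx.le hx1 hmn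
  have hy5 : |y| ≤ x ^ 5 := hy.trans (hpow hN)
  have hxh2 : |x - xh| ≤ x ^ 2 := hxh.trans (hpow (by norm_num))
  have hyh5 : |yh| ≤ 2 * x ^ 5 := by
    have hyy : |y - yh| ≤ x ^ 8 * x ^ 3 := (div_le_iff₀ (by positivity)).mp hyh
    have : x ^ 8 * x ^ 3 ≤ x ^ 5 := by rw [← pow_add]; exact hpow (by norm_num)
    linarith [abs_sub_abs_le_abs_sub yh y, abs_sub_comm y yh]
  obtain ⟨hxh0, hxh2x⟩ := nonneg_and_le_two_mul_of_abs_sub_le hx.le hx1 hxh2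
  have hp : (x, y) ∈ closedBall (0 : ℝ × ℝ) r :=
    mk_mem_closedBall_zero (by rw [abs_of_pos hx]; linarith)
      (by linarith [hpow (show 1 ≤ 5 by norm_num), pow_one x])
  have hq : (xh, yh) ∈ closedBall (0 : ℝ × ℝ) r :=
    mk_mem_closedBall_zero (by rw [abs_of_nonneg hxh0]; linarith)
      (by linarith [hpow (show 1 ≤ 5 by norm_num), pow_one x])
  have hy3 : |y| ≤ x ^ 3 := hy5.trans (hpow (by norm_num))
  exact ⟨abs_XIA_sub_add_abs_YIA_sub_div_le hA hB hC hD hE hp hq hx hx1 h2Mx hMlam hlamx hy3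
      hxh2 hyh5 hCX,
    inv_XIA_pow_eight_le (hA.1 _ hp) (hB.1 _ hp) hx h2Mx hy3 hCinv⟩

end FormIA

/-- For `Φ` of the form (IA) there exist `δ > 0` and `C > 0` such
that for `0 < x ≤ δ`, `|y| ≤ xᴺ`, `|x - x̂| ≤ x⁸` and `x⁻³|y - ŷ| ≤ x⁸`, writing
`(X,Y) = Φ(x,y)` and `(X̂,Ŷ) = Φ(x̂,ŷ)`, one has
`|X - X̂| + X⁻³|Y - Ŷ| ≤ (1 + 2x + Cx²)(|x - x̂| + x⁻³|y - ŷ|)` and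
`X⁻⁸ ≤ x⁻⁸(1 - 8x + Cx²)`. -/
theorem shadowing_estimates
    (θA θB θC θD θE : ℝ × ℝ → ℝ) (V : Set (ℝ × ℝ)) (hV : V ∈ 𝓝 (0 : ℝ × ℝ))
    (hθA : ContDiffOn ℝ (⊤ : ℕ∞) θA V) (hθB : ContDiffOn ℝ (⊤ : ℕ∞) θB V)
    (hθC : ContDiffOn ℝ (⊤ : ℕ∞) θC V) (hθD : ContDiffOn ℝ (⊤ : ℕ∞) θD V)
    (hθE : ContDiffOn ℝ (⊤ : ℕ∞) θE V)
    (lam : ℝ) (hlam : 0 < lam) (N : ℕ) (hN : 100 ≤ N)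
    :
    ∃ δ > (0 : ℝ), ∃ C > (0 : ℝ), ∀ x y xh yh : ℝ,
      0 < x → x ≤ δ → |y| ≤ x ^ N →
      |x - xh| ≤ x ^ 8 → |y - yh| / x ^ 3 ≤ x ^ 8 →
      |XIA θA θB x y - XIA θA θB xh yh|
          + |YIA θC θD θE lam N x y - YIA θC θD θE lam N xh yh| / (XIA θA θB x y) ^ 3
        ≤ (1 + 2 * x + C * x ^ 2) * (|x - xh| + |y - yh| / x ^ 3) ∧
      ((XIA θA θB x y) ^ 8)⁻¹ ≤ (x ^ 8)⁻¹ * (1 - 8 * x + C * x ^ 2) := by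
  have contDiffAt_one (θ : ℝ × ℝ → ℝ) (hθ : ContDiffOn ℝ (⊤ : ℕ∞) θ V) : ContDiffAt ℝ 1 θ 0 :=
    (hθ.contDiffAt hV).of_le (by exact_mod_cast le_top)
  obtain ⟨⟨r, M⟩, ⟨hr, hM⟩, hA, hB, hC, hD, hE⟩ :=
    (((eventually_mem_nhdsWithin (s := Ioi (0 : ℝ))).prod_mk (eventually_gt_atTop 0)).and <|
      (contDiffAt_one θA hθA).eventually_boundedLipschitzOn.and <|
      (contDiffAt_one θB hθB).eventually_boundedLipschitzOn.and <|
      (contDiffAt_one θC hθC).eventually_boundedLipschitzOn.and <|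
      (contDiffAt_one θD hθD).eventually_boundedLipschitzOn.and
      (contDiffAt_one θE hθE).eventually_boundedLipschitzOn).exists
  dsimp only at hM hA hB hC hD hE
  rw [mem_Ioi] at hr
  have h2M : 0 < 2 * M := by positivity
  refine ⟨min (min 1 (r / 2)) (min (lam / (2 * M)) (min (1 / lam) (1 / (2 * M)))), by positivity,
    1 + 23 * M + (2 * (lam + 11 * M) + M * ((N + 100) * 2 ^ (N + 99) + 2 ^ (N + 100)))
      + (16 * M + 64), by positivity, ?_⟩
  intro x y xh yh hx hxδ
  simp only [le_min_iff, le_div_iff₀ h2M, le_div_iff₀ hlam] at hxδ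
  obtain ⟨⟨hx1, hxr⟩, hxlam, hxlam', hxM⟩ := hxδ
  exact shadowing_estimates_of_boundedLipschitzOn hA hB hC hD hE (by omega)
    (le_add_of_nonneg_right (by positivity)) (le_add_of_nonneg_left (by positivity))
    hx hx1 (by linarith) (by linarith) (by linarith) (by linarith)
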